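/- Let r : D → ℝ³ be a smooth surface patch, a a fixed unit vector, L a constant, λ = L − ⟨r,a⟩, n the unit normal, and b = a − 2⟨a,n⟩n. Then the reflected front ρ = r + λ·b satisfies ⟨∂ᵢρ, b⟩ = 0 for i = 1,2, i.e. b is normal to the reflected front. -/

import Mathlib

/-!
Reflecting `a` in the tangent plane keeps it a unit vector, so `⟨∂ᵢb, b⟩ = 0`; and since `∂ᵢr`
is tangent, `⟨∂ᵢr, b⟩ = ⟨∂ᵢr, a⟩ = -∂ᵢλ`. Hence
`⟨∂ᵢρ, b⟩ = ⟨∂ᵢr, b⟩ + ∂ᵢλ ‖b‖² + λ ⟨∂ᵢb, b⟩ = 0`.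
-/

open RealInnerProductSpace Filter Topology

variable {E F : Type*} [NormedAddCommGroup E] [NormedSpace ℝ E]
  [NormedAddCommGroup F] [InnerProductSpace ℝ F]

theorem norm_sub_two_inner_smul_of_norm_eq_one {n : F} (hn : ‖n‖ = 1) (a : F) :
    ‖a - (2 * ⟪a, n⟫) • n‖ = ‖a‖ := by
  have hnn : ⟪n, n⟫ = 1 := by rw [real_inner_self_eq_norm_sq, hn, one_pow]
  rw [← sq_eq_sq₀ (norm_nonneg _) (norm_nonneg _), ← real_inner_self_eq_norm_sq,
    ← real_inner_self_eq_norm_sq]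
  simp only [inner_sub_left, inner_sub_right, real_inner_smul_left, real_inner_smul_right, hnn,
    real_inner_comm n a]
  ring

theorem inner_sub_two_inner_smul_of_inner_eq_zero {v n : F} (hv : ⟪v, n⟫ = 0) (a : F) :
    ⟪v, a - (2 * ⟪a, n⟫) • n⟫ = ⟪v, a⟫ := by
  rw [inner_sub_right, real_inner_smul_right, hv, mul_zero, sub_zero]

theorem inner_fderiv_self_eq_zero_of_eventually_norm_eq {f : E → F} {u : E} {c : ℝ}
    (hf : DifferentiableAt ℝ f u) (hc : ∀ᶠ v in 𝓝 u, ‖f v‖ = c) (e : E) :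
    ⟪fderiv ℝ f u e, f u⟫ = 0 := by
  have hconst : (fun v => ⟪f v, f v⟫) =ᶠ[𝓝 u] fun _ => c ^ 2 := by
    filter_upwards [hc] with v hv
    rw [real_inner_self_eq_norm_sq, hv]
  have h := congrArg (fun L => L e) (hconst.fderiv_eq (𝕜 := ℝ))
  simp only [fderiv_inner_apply ℝ hf hf, fderiv_const_apply,
    zero_apply, real_inner_comm (fderiv ℝ f u e)] at h
  linarith

theorem inner_fderiv_add_smul_eq_zero {r b : E → F} {lam : E → ℝ} {u : E}
    (hr : DifferentiableAt ℝ r u) (hlam : DifferentiableAt ℝ lam u)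
    (hb : DifferentiableAt ℝ b u) (hb1 : ∀ᶠ v in 𝓝 u, ‖b v‖ = 1)
    (e : E) (hlam' : fderiv ℝ lam u e = -⟪fderiv ℝ r u e, b u⟫) :
    ⟪fderiv ℝ (fun v => r v + lam v • b v) u e, b u⟫ = 0 := by
  have hbb : ⟪b u, b u⟫ = 1 := by
    rw [real_inner_self_eq_norm_sq, hb1.self_of_nhds, one_pow]
  rw [fderiv_fun_add (g := fun v => lam v • b v) hr (hlam.fun_smul hb), fderiv_fun_smul hlam hb]
  simp only [add_apply, smul_apply, ContinuousLinearMap.smulRight_apply, inner_add_left, real_inner_smul_left, hlam', hbb,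
    inner_fderiv_self_eq_zero_of_eventually_norm_eq hb hb1 e]
  ring

/-- For a surface patch `r` with unit normal `n`, fixed unit incident direction `a`,
`λ = L − ⟨r,a⟩` and reflected direction `b = a − 2⟨a,n⟩n`, the reflected front
`ρ = r + λ b` has `b` as normal: `⟨∂ᵢρ, b⟩ = 0` in every direction. -/
theorem reflected_front_normal
    (r n : (ℝ × ℝ) → EuclideanSpace ℝ (Fin 3))
    (a : EuclideanSpace ℝ (Fin 3)) (L : ℝ)
    (hr : Differentiable ℝ r) (hn : Differentiable ℝ n)
    (hnunit : ∀ u, ‖n u‖ = 1) (ha : ‖a‖ = 1)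
    (hnormal : ∀ u e, ⟪fderiv ℝ r u e, n u⟫ = 0)
    (lam : (ℝ × ℝ) → ℝ) (hlam : ∀ u, lam u = L - ⟪r u, a⟫)
    (b : (ℝ × ℝ) → EuclideanSpace ℝ (Fin 3))
    (hb : ∀ u, b u = a - (2 * ⟪a, n u⟫) • n u)
    (ρ : (ℝ × ℝ) → EuclideanSpace ℝ (Fin 3))
    (hρ : ∀ u, ρ u = r u + lam u • b u) :
    ∀ u e, ⟪fderiv ℝ ρ u e, b u⟫ = 0 := by
  obtain rfl : ρ = fun u => r u + lam u • b u := funext hρ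
  have hb_diff : Differentiable ℝ b := by
    rw [funext hb]
    exact (differentiable_const a).sub
      (((differentiable_const a).inner ℝ hn).const_mul 2 |>.smul hn)
  have hlam_diff : Differentiable ℝ lam := by
    rw [funext hlam]
    exact (differentiable_const L).sub (hr.inner ℝ (differentiable_const a))
  have hb_unit : ∀ u, ‖b u‖ = 1 := fun u => by
    rw [hb, norm_sub_two_inner_smul_of_norm_eq_one (hnunit u), ha]
  intro u e
  refine inner_fderiv_add_smul_eq_zero (hr u) (hlam_diff u) (hb_diff u)
    (Eventually.of_forall hb_unit) e ?_
  rw [hb, inner_sub_two_inner_smul_of_inner_eq_zero (hnormal u e), funext hlam, fderiv_const_sub,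
    neg_apply, fderiv_inner_apply ℝ (hr u) (differentiableAt_const a)]
  simp
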